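/- Linear convergence rate for differences of convex payoffs: if μᵇ ≼c μᵃ, μᵐ = (μᵇ + μᵃ)/2, and h = ψᵃ − ψᵇ for Lipschitz convex functions ψᵃ, ψᵇ, then 0 ≤ P(h) − μᵐ(h) ≤ (Lip(ψᵃ) + Lip(ψᵇ)) · d(μᵇ,μᵃ), where P(h) = sup_{μᵇ ≼c μ ≼c μᵃ} μ(h). -/

import Mathlib

open MeasureTheory Set Filter Topology
open scoped NNReal ENNReal

noncomputable section

/-- Linear growth on the nonnegative half-line. -/
def LinGrowth (f : ℝ → ℝ) : Prop := ∃ C : ℝ, ∀ x ≥ (0:ℝ), |f x| ≤ C * (1 + x)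

/-- A probability measure on ℝ supported on ℝ₊ with finite first moment. -/
def IsP1 (μ : Measure ℝ) : Prop :=
  IsProbabilityMeasure μ ∧ (∀ᵐ x ∂μ, 0 ≤ x) ∧ Integrable id μ

/-- Convex order: integrals of convex linear-growth test functions are ordered. -/
def CvxOrder (μ ν : Measure ℝ) : Prop :=
  ∀ ψ : ℝ → ℝ, ConvexOn ℝ (Ici (0:ℝ)) ψ → LinGrowth ψ →
    ∫ x, ψ x ∂μ ≤ ∫ x, ψ x ∂ν

/-- The directed bid–ask distance. -/
def dirDist (μ ν : Measure ℝ) : ℝ :=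
  sSup {r : ℝ | ∃ ψ : ℝ → ℝ, ConvexOn ℝ (Ici (0:ℝ)) ψ ∧
    LipschitzOnWith 1 ψ (Ici (0:ℝ)) ∧ r = ∫ x, ψ x ∂μ - ∫ x, ψ x ∂ν}

/-- The (symmetrized) bid–ask distance. -/
def baDist (μ ν : Measure ℝ) : ℝ := (dirDist μ ν + dirDist ν μ) / 2

/-- Primal BAMOT value for a single maturity. -/
def Pval (μb μa : Measure ℝ) (h : ℝ → ℝ) : ℝ :=
  sSup {r : ℝ | ∃ μ : Measure ℝ, IsP1 μ ∧ CvxOrder μb μ ∧ CvxOrder μ μa ∧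
    r = ∫ x, h x ∂μ}

/-!
The midpoint μᵐ lies between μᵇ and μᵃ in convex order, which gives the lower bound. For the
upper bound, every admissible μ satisfies μ(ψᵃ) ≤ μᵃ(ψᵃ) and μ(ψᵇ) ≥ μᵇ(ψᵇ), so
P(h) − μᵐ(h) ≤ ½ (μᵃ − μᵇ)(ψᵃ) + ½ (μᵃ − μᵇ)(ψᵇ). Rescaling ψ by its Lipschitz constant turns
each term into a test function of d⃗(μᵃ, μᵇ), and d⃗(μᵇ, μᵃ) ≥ 0 gives ½ d⃗(μᵃ, μᵇ) ≤ d(μᵇ, μᵃ).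
-/

lemma aestronglyMeasurable_of_convexOn_Ici {μ : Measure ℝ} (hμ : ∀ᵐ x ∂μ, 0 ≤ x)
    {ψ : ℝ → ℝ} (hψ : ConvexOn ℝ (Ici 0) ψ) : AEStronglyMeasurable ψ μ := by
  rw [← Measure.restrict_eq_self_of_ae_mem (s := Ici 0) hμ, ← Ioi_union_left,
    aestronglyMeasurable_union_iff, Measure.restrict_singleton]
  -- a convex function is continuous on the interior, and may only jump at the endpoint `0`
  refine ⟨ContinuousOn.aestronglyMeasurable ?_ measurableSet_Ioi,
    aestronglyMeasurable_dirac.smul_measure _⟩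
  exact (hψ.subset Ioi_subset_Ici_self (convex_Ioi 0)).continuousOn isOpen_Ioi

lemma LipschitzOnWith.linGrowth {ψ : ℝ → ℝ} {L : ℝ≥0} (h : LipschitzOnWith L ψ (Ici 0)) :
    LinGrowth ψ := by
  refine ⟨|ψ 0| + L, fun x hx => ?_⟩
  have hdist := h.dist_le_mul x hx 0 self_mem_Ici
  rw [Real.dist_eq, Real.dist_eq, sub_zero, abs_of_nonneg hx] at hdist
  have := abs_sub_abs_le_abs_sub (ψ x) (ψ 0)
  nlinarith [abs_nonneg (ψ 0), L.2]

namespace IsP1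

variable {μ : Measure ℝ} {ψ : ℝ → ℝ}

lemma integrable_of_linGrowth (hμ : IsP1 μ) (hc : ConvexOn ℝ (Ici 0) ψ) (hg : LinGrowth ψ) :
    Integrable ψ μ := by
  obtain ⟨hprob, hpos, hid⟩ := hμ
  obtain ⟨C, hC⟩ := hg
  refine ((integrable_const 1).add hid).const_mul |C| |>.mono'
    (aestronglyMeasurable_of_convexOn_Ici hpos hc) ?_
  filter_upwards [hpos] with x hx
  have := hC x hx
  simp only [Real.norm_eq_abs, id, Pi.add_apply]
  nlinarith [le_abs_self C]

lemma abs_integral_sub_le (hμ : IsP1 μ) {L : ℝ≥0} (hc : ConvexOn ℝ (Ici 0) ψ)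
    (hlip : LipschitzOnWith L ψ (Ici 0)) :
    |∫ x, ψ x ∂μ - ψ 0| ≤ L * ∫ x, x ∂μ := by
  have hψ := hμ.integrable_of_linGrowth hc hlip.linGrowth
  obtain ⟨hprob, hpos, hid⟩ := hμ
  rw [← integral_const_mul, ← Real.norm_eq_abs]
  have : ∫ x, ψ x ∂μ - ψ 0 = ∫ x, (ψ x - ψ 0) ∂μ := by
    rw [integral_sub hψ (integrable_const _), integral_const, probReal_univ, one_smul]
  rw [this]
  refine norm_integral_le_of_norm_le (hid.const_mul L) ?_
  filter_upwards [hpos] with x hx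
  simpa [Real.dist_eq, abs_of_nonneg hx] using hlip.dist_le_mul x hx 0 self_mem_Ici

end IsP1

lemma le_dirDist {μ ν : Measure ℝ} (hμ : IsP1 μ) (hν : IsP1 ν) {ψ : ℝ → ℝ}
    (hc : ConvexOn ℝ (Ici 0) ψ) (hlip : LipschitzOnWith 1 ψ (Ici 0)) :
    ∫ x, ψ x ∂μ - ∫ x, ψ x ∂ν ≤ dirDist μ ν := by
  refine le_csSup ⟨(∫ x, x ∂μ) + ∫ x, x ∂ν, ?_⟩ ⟨ψ, hc, hlip, rfl⟩
  rintro r ⟨φ, hφc, hφlip, rfl⟩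
  have hφμ := abs_le.1 (hμ.abs_integral_sub_le hφc hφlip)
  have hφν := abs_le.1 (hν.abs_integral_sub_le hφc hφlip)
  push_cast at hφμ hφν
  linarith [hφμ.2, hφν.1]

lemma dirDist_nonneg {μ ν : Measure ℝ} (hμ : IsP1 μ) (hν : IsP1 ν) : 0 ≤ dirDist μ ν := by
  simpa using le_dirDist hμ hν (convexOn_const 0 (convex_Ici 0))
    (LipschitzWith.const' (0 : ℝ)).lipschitzOnWith

lemma integral_sub_integral_le_mul_dirDist {μ ν : Measure ℝ} (hμ : IsP1 μ) (hν : IsP1 ν)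
    {ψ : ℝ → ℝ} {L : ℝ≥0} (hc : ConvexOn ℝ (Ici 0) ψ) (hlip : LipschitzOnWith L ψ (Ici 0)) :
    ∫ x, ψ x ∂μ - ∫ x, ψ x ∂ν ≤ L * dirDist μ ν := by
  rcases eq_or_ne L 0 with rfl | hL
  · have hμ0 := hμ.abs_integral_sub_le hc hlip
    have hν0 := hν.abs_integral_sub_le hc hlip
    simp only [NNReal.coe_zero, zero_mul, abs_nonpos_iff, sub_eq_zero] at hμ0 hν0 ⊢
    rw [hμ0, hν0, sub_self]
  · have hφlip : LipschitzOnWith 1 (fun x => (L : ℝ)⁻¹ • ψ x) (Ici 0) := by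
      have h := (lipschitzWith_smul (L : ℝ)⁻¹).comp_lipschitzOnWith hlip
      rwa [show ‖(L : ℝ)⁻¹‖₊ * L = 1 by simp [hL]] at h
    have hφc : ConvexOn ℝ (Ici 0) (fun x => (L : ℝ)⁻¹ • ψ x) := hc.smul (by positivity)
    have := le_dirDist hμ hν hφc hφlip
    simp only [smul_eq_mul, integral_const_mul, ← mul_sub] at this
    rwa [inv_mul_le_iff₀ (by positivity)] at this

lemma integral_midpoint_measure {μ ν : Measure ℝ} {f : ℝ → ℝ}
    (hμ : Integrable f μ) (hν : Integrable f ν) :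
    ∫ x, f x ∂((2:ℝ≥0)⁻¹ • μ + (2:ℝ≥0)⁻¹ • ν) = (∫ x, f x ∂μ + ∫ x, f x ∂ν) / 2 := by
  rw [integral_add_measure hμ.smul_measure_nnreal hν.smul_measure_nnreal,
    integral_smul_nnreal_measure, integral_smul_nnreal_measure, NNReal.smul_def,
    NNReal.smul_def]
  push_cast
  ring

lemma IsP1.midpoint {μ ν : Measure ℝ} (hμ : IsP1 μ) (hν : IsP1 ν) :
    IsP1 ((2:ℝ≥0)⁻¹ • μ + (2:ℝ≥0)⁻¹ • ν) := by
  obtain ⟨hμp, hμpos, hμid⟩ := hμ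
  obtain ⟨hνp, hνpos, hνid⟩ := hν
  refine ⟨⟨?_⟩, ?_, hμid.smul_measure_nnreal.add_measure hνid.smul_measure_nnreal⟩
  · simp [ENNReal.smul_def, ENNReal.inv_two_add_inv_two]
  · rw [ae_add_measure_iff]
    exact ⟨Measure.ae_smul_measure hμpos _, Measure.ae_smul_measure hνpos _⟩

namespace CvxOrder

variable {μ ν : Measure ℝ}

lemma midpoint_left (hμ : IsP1 μ) (hν : IsP1 ν) (h : CvxOrder μ ν) :
    CvxOrder μ ((2:ℝ≥0)⁻¹ • μ + (2:ℝ≥0)⁻¹ • ν) := by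
  intro ψ hc hg
  rw [integral_midpoint_measure (hμ.integrable_of_linGrowth hc hg)
    (hν.integrable_of_linGrowth hc hg)]
  linarith [h ψ hc hg]

lemma midpoint_right (hμ : IsP1 μ) (hν : IsP1 ν) (h : CvxOrder μ ν) :
    CvxOrder ((2:ℝ≥0)⁻¹ • μ + (2:ℝ≥0)⁻¹ • ν) ν := by
  intro ψ hc hg
  rw [integral_midpoint_measure (hμ.integrable_of_linGrowth hc hg)
    (hν.integrable_of_linGrowth hc hg)]
  linarith [h ψ hc hg]

end CvxOrder

section Pval

variable {μb μa : Measure ℝ} {ψa ψb : ℝ → ℝ}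

lemma integral_sub_le_of_cvxOrder {μ : Measure ℝ} (hμ : IsP1 μ) (hbμ : CvxOrder μb μ)
    (hμa : CvxOrder μ μa) (hψa : ConvexOn ℝ (Ici 0) ψa) (hga : LinGrowth ψa)
    (hψb : ConvexOn ℝ (Ici 0) ψb) (hgb : LinGrowth ψb) :
    ∫ x, (ψa x - ψb x) ∂μ ≤ ∫ x, ψa x ∂μa - ∫ x, ψb x ∂μb := by
  rw [integral_sub (hμ.integrable_of_linGrowth hψa hga) (hμ.integrable_of_linGrowth hψb hgb)]
  linarith [hμa ψa hψa hga, hbμ ψb hψb hgb]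

lemma integral_sub_le_Pval {μ : Measure ℝ} (hμ : IsP1 μ) (hbμ : CvxOrder μb μ)
    (hμa : CvxOrder μ μa) (hψa : ConvexOn ℝ (Ici 0) ψa) (hga : LinGrowth ψa)
    (hψb : ConvexOn ℝ (Ici 0) ψb) (hgb : LinGrowth ψb) :
    ∫ x, (ψa x - ψb x) ∂μ ≤ Pval μb μa (fun x => ψa x - ψb x) := by
  refine le_csSup ⟨∫ x, ψa x ∂μa - ∫ x, ψb x ∂μb, ?_⟩ ⟨μ, hμ, hbμ, hμa, rfl⟩
  rintro r ⟨ν, hν, hbν, hνa, rfl⟩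
  exact integral_sub_le_of_cvxOrder hν hbν hνa hψa hga hψb hgb

lemma Pval_sub_le (hne : ∃ μ, IsP1 μ ∧ CvxOrder μb μ ∧ CvxOrder μ μa)
    (hψa : ConvexOn ℝ (Ici 0) ψa) (hga : LinGrowth ψa)
    (hψb : ConvexOn ℝ (Ici 0) ψb) (hgb : LinGrowth ψb) :
    Pval μb μa (fun x => ψa x - ψb x) ≤ ∫ x, ψa x ∂μa - ∫ x, ψb x ∂μb := by
  obtain ⟨μ, hμ, hbμ, hμa⟩ := hne
  refine csSup_le ⟨_, μ, hμ, hbμ, hμa, rfl⟩ ?_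
  rintro r ⟨ν, hν, hbν, hνa, rfl⟩
  exact integral_sub_le_of_cvxOrder hν hbν hνa hψa hga hψb hgb

end Pval

/-- linear convergence rate for differences of convex payoffs. -/
theorem bamot_linear_rate (μb μa : Measure ℝ) (hb : IsP1 μb) (ha : IsP1 μa)
    (hord : CvxOrder μb μa)
    (ψa ψb : ℝ → ℝ) (La Lb : ℝ≥0)
    (hψa : ConvexOn ℝ (Ici (0:ℝ)) ψa) (hla : LipschitzOnWith La ψa (Ici (0:ℝ)))
    (hψb : ConvexOn ℝ (Ici (0:ℝ)) ψb) (hlb : LipschitzOnWith Lb ψb (Ici (0:ℝ))) :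
    0 ≤ Pval μb μa (fun x => ψa x - ψb x) -
        ∫ x, (ψa x - ψb x) ∂((2:ℝ≥0)⁻¹ • μb + (2:ℝ≥0)⁻¹ • μa) ∧
    Pval μb μa (fun x => ψa x - ψb x) -
        ∫ x, (ψa x - ψb x) ∂((2:ℝ≥0)⁻¹ • μb + (2:ℝ≥0)⁻¹ • μa)
      ≤ ((La : ℝ) + (Lb : ℝ)) * baDist μb μa := by
  have hga := hla.linGrowth
  have hgb := hlb.linGrowth
  have hm := hb.midpoint ha
  have hbm := hord.midpoint_left hb ha
  have hma := hord.midpoint_right hb ha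
  refine ⟨sub_nonneg.2 (integral_sub_le_Pval hm hbm hma hψa hga hψb hgb), ?_⟩
  have hP := Pval_sub_le ⟨_, hm, hbm, hma⟩ hψa hga hψb hgb
  have hia := fun {κ} (hκ : IsP1 κ) => hκ.integrable_of_linGrowth hψa hga
  have hib := fun {κ} (hκ : IsP1 κ) => hκ.integrable_of_linGrowth hψb hgb
  rw [integral_midpoint_measure (f := fun x => ψa x - ψb x) ((hia hb).sub (hib hb))
    ((hia ha).sub (hib ha)), integral_sub (hia hb) (hib hb), integral_sub (hia ha) (hib ha)]
  have hDa := integral_sub_integral_le_mul_dirDist ha hb hψa hla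
  have hDb := integral_sub_integral_le_mul_dirDist ha hb hψb hlb
  have hd : dirDist μa μb / 2 ≤ baDist μb μa := by
    rw [baDist]
    linarith [dirDist_nonneg hb ha]
  calc _ ≤ ((∫ x, ψa x ∂μa - ∫ x, ψa x ∂μb) + (∫ x, ψb x ∂μa - ∫ x, ψb x ∂μb)) / 2 := by
        linarith
    _ ≤ (La + Lb) * (dirDist μa μb / 2) := by linarith
    _ ≤ (La + Lb) * baDist μb μa := by gcongr
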